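/- arXiv:2401.05185 — 2 statements merged into one kernel-verified Lean document; each statement's English description precedes it below -/
import Mathlib

section
/- Every quasi-component of a spectral space is connected. -/
open Set TopologicalSpace Topology

/-!
Let `Q` be the quasi-component of `x` and let `Q ⊆ u ∪ v` with `u`, `v` disjoint closed sets.
Since `Q` is stable under generalization and `u`, `v` are closed and disjoint, no point
specializes both to a point of `Q ∩ u` and to a point of `Q ∩ v`. Compactness of the
constructible topology, in which compact opens are closed, then separates `Q ∩ u` and `Q ∩ v`
by disjoint opens `U` and `V`: otherwise some point would lie in every compact open containing
either set, and would specialize into both. By compactness of `X` some clopen `K ∋ x` lies in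
`U ∪ V`, and `K ∩ U` is a clopen neighbourhood of `x` that misses `v` when `x ∈ u`.
-/

section

variable {X : Type*} [TopologicalSpace X]

def quasiComponent (x : X) : Set X :=
  ⋂₀ {A | IsClopen A ∧ x ∈ A}

lemma mem_quasiComponent_self (x : X) : x ∈ quasiComponent x :=
  mem_sInter.2 fun _ hA ↦ hA.2

lemma quasiComponent_subset {x : X} {A : Set X} (hA : IsClopen A) (hx : x ∈ A) :
    quasiComponent x ⊆ A :=
  sInter_subset_of_mem ⟨hA, hx⟩

lemma isClosed_quasiComponent (x : X) : IsClosed (quasiComponent x) :=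
  isClosed_sInter fun _ hA ↦ hA.1.isClosed

lemma stableUnderGeneralization_quasiComponent (x : X) :
    StableUnderGeneralization (quasiComponent x) :=
  fun _ _ hyz hz ↦ mem_sInter.2 fun A hA ↦ hyz.mem_open hA.1.isOpen (mem_sInter.1 hz A hA)

lemma quasiComponent_subset_of_isOpen_cover [CompactSpace X] {x : X} {U V : Set X}
    (hU : IsOpen U) (hV : IsOpen V) (hUV : Disjoint U V) (hQ : quasiComponent x ⊆ U ∪ V)
    (hx : x ∈ U) : quasiComponent x ⊆ U := by
  have : Nonempty {A : Set X // IsClopen A ∧ x ∈ A} := ⟨⟨univ, isClopen_univ, mem_univ x⟩⟩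
  obtain ⟨⟨K, hK, hxK⟩, hKUV⟩ := exists_subset_nhds_of_compactSpace
    (V := fun A : {A : Set X // IsClopen A ∧ x ∈ A} ↦ A.1)
    (fun A B ↦ ⟨⟨A ∩ B, A.2.1.inter B.2.1, A.2.2, B.2.2⟩, inter_subset_left, inter_subset_right⟩)
    (fun A ↦ A.2.1.isClosed)
    (fun y hy ↦ (hU.union hV).mem_nhds (hQ (by rwa [quasiComponent, sInter_eq_iInter])))
  exact (quasiComponent_subset (isClopen_inter_of_disjoint_cover_clopen hK hKUV hU hV hUV)
    ⟨hxK, hx⟩).trans inter_subset_right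

lemma compactSpace_constructibleTopology [CompactSpace X] [QuasiSober X] [PrespectralSpace X]
    [QuasiSeparatedSpace X] : @CompactSpace X (constructibleTopology X) :=
  @Function.Surjective.compactSpace _ _ _ (constructibleTopology X) _
    (WithTopology.continuous_ofTopology _) _ (WithTopology.ofTopology_surjective _)

lemma IsCompact.isClosed_constructibleTopology_of_isOpen {s : Set X} (hs : IsCompact s)
    (ho : IsOpen s) : IsClosed[constructibleTopology X] s :=
  @isOpen_compl_iff X s (constructibleTopology X) |>.1 <|
    IsCompact.isOpen_constructibleTopology_of_isClosed (by rwa [compl_compl]) ho.isClosed_compl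

lemma nonempty_sInter_of_isOpen_isCompact [CompactSpace X] [QuasiSober X] [PrespectralSpace X]
    [QuasiSeparatedSpace X] {S : Set (Set X)} (hS : ∀ s ∈ S, IsOpen s ∧ IsCompact s)
    (hfin : ∀ t ⊆ S, t.Finite → (⋂₀ t).Nonempty) : (⋂₀ S).Nonempty :=
  @CompactSpace.nonempty_sInter X (constructibleTopology X) compactSpace_constructibleTopology S
    (fun s hs ↦ (hS s hs).2.isClosed_constructibleTopology_of_isOpen (hS s hs).1) hfin

lemma IsCompact.exists_specializes_of_forall_isOpen_isCompact [PrespectralSpace X] {A : Set X}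
    (hA : IsCompact A) {y : X} (hy : ∀ W, IsOpen W → IsCompact W → A ⊆ W → y ∈ W) :
    ∃ a ∈ A, y ⤳ a := by
  by_contra! h
  have hA' : A ⊆ (closure {y})ᶜ := fun a ha hya ↦ h a ha (specializes_iff_mem_closure.2 hya)
  obtain ⟨W, hWc, hWo, hAW, hWy⟩ := PrespectralSpace.exists_isCompact_and_isOpen_between hA
    isClosed_closure.isOpen_compl hA'
  exact hWy (hy W hWo hWc hAW) (subset_closure rfl)

lemma exists_isOpen_disjoint_of_forall_not_specializes [CompactSpace X] [QuasiSober X]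
    [PrespectralSpace X] [QuasiSeparatedSpace X] {A C : Set X} (hA : IsCompact A)
    (hC : IsCompact C) (h : ∀ y, ∀ a ∈ A, ∀ c ∈ C, y ⤳ a → y ⤳ c → False) :
    ∃ U V, IsOpen U ∧ IsOpen V ∧ A ⊆ U ∧ C ⊆ V ∧ Disjoint U V := by
  by_contra! hsep
  have hfin : ∀ t ⊆ {W | IsOpen W ∧ IsCompact W ∧ (A ⊆ W ∨ C ⊆ W)}, t.Finite →
      (⋂₀ t).Nonempty := by
    intro t ht htf
    have hopen : ∀ P : Set X → Prop, IsOpen (⋂₀ {W ∈ t | P W}) := fun P ↦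
      (htf.subset (sep_subset t P)).isOpen_sInter fun W hW ↦ (ht hW.1).1
    obtain ⟨p, hpA, hpC⟩ := not_disjoint_iff.1 <| hsep _ _ (hopen (A ⊆ ·)) (hopen (C ⊆ ·))
      (subset_sInter fun W hW ↦ hW.2) (subset_sInter fun W hW ↦ hW.2)
    refine ⟨p, mem_sInter.2 fun W hW ↦ ?_⟩
    rcases (ht hW).2.2 with hAW | hCW
    exacts [mem_sInter.1 hpA W ⟨hW, hAW⟩, mem_sInter.1 hpC W ⟨hW, hCW⟩]
  obtain ⟨y, hy⟩ := nonempty_sInter_of_isOpen_isCompact (fun W hW ↦ ⟨hW.1, hW.2.1⟩) hfin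
  obtain ⟨a, ha, hya⟩ := hA.exists_specializes_of_forall_isOpen_isCompact
    fun W hWo hWc hAW ↦ mem_sInter.1 hy W ⟨hWo, hWc, .inl hAW⟩
  obtain ⟨c, hc, hyc⟩ := hC.exists_specializes_of_forall_isOpen_isCompact
    fun W hWo hWc hCW ↦ mem_sInter.1 hy W ⟨hWo, hWc, .inr hCW⟩
  exact h y a ha c hc hya hyc

section Spectral

variable [CompactSpace X] [QuasiSober X] [PrespectralSpace X] [QuasiSeparatedSpace X]

lemma quasiComponent_subset_of_isClosed_cover {x : X} {u v : Set X} (hu : IsClosed u)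
    (hv : IsClosed v) (huv : Disjoint u v) (hQ : quasiComponent x ⊆ u ∪ v) (hx : x ∈ u) :
    quasiComponent x ⊆ u := by
  set Q := quasiComponent x
  have hgen : ∀ y, ∀ a ∈ Q ∩ u, ∀ c ∈ Q ∩ v, y ⤳ a → y ⤳ c → False := by
    rintro y a ⟨haQ, hau⟩ c ⟨-, hcv⟩ hya hyc
    rcases hQ (stableUnderGeneralization_quasiComponent x hya haQ) with hyu | hyv
    · exact huv.ne_of_mem (hyc.mem_closed hu hyu) hcv rfl
    · exact huv.ne_of_mem hau (hya.mem_closed hv hyv) rfl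
  obtain ⟨U, V, hU, hV, hQU, hQV, hUV⟩ := exists_isOpen_disjoint_of_forall_not_specializes
    ((isClosed_quasiComponent x).inter hu).isCompact
    ((isClosed_quasiComponent x).inter hv).isCompact hgen
  have hQUV : Q ⊆ U ∪ V := fun q hq ↦
    (hQ hq).imp (fun hqu ↦ hQU ⟨hq, hqu⟩) (fun hqv ↦ hQV ⟨hq, hqv⟩)
  have hQU' : Q ⊆ U :=
    quasiComponent_subset_of_isOpen_cover hU hV hUV hQUV (hQU ⟨mem_quasiComponent_self x, hx⟩)
  exact fun q hq ↦ (hQ hq).resolve_right fun hqv ↦ hUV.ne_of_mem (hQU' hq) (hQV ⟨hq, hqv⟩) rfl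

lemma isConnected_quasiComponent (x : X) : IsConnected (quasiComponent x) := by
  refine ⟨⟨x, mem_quasiComponent_self x⟩, ?_⟩
  rw [isPreconnected_iff_subset_of_fully_disjoint_closed (isClosed_quasiComponent x)]
  intro u v hu hv hQ huv
  rcases hQ (mem_quasiComponent_self x) with hx | hx
  · exact .inl (quasiComponent_subset_of_isClosed_cover hu hv huv hQ hx)
  · exact .inr (quasiComponent_subset_of_isClosed_cover hv hu huv.symm (union_comm u v ▸ hQ) hx)

end Spectral

lemma QuasiSeparatedSpace.of_isTopologicalBasis_of_inter_mem {B : Set (Set X)}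
    (hB : IsTopologicalBasis B) (hBc : ∀ U ∈ B, IsCompact U) (hBi : ∀ U ∈ B, ∀ V ∈ B, U ∩ V ∈ B) :
    QuasiSeparatedSpace X :=
  .of_isTopologicalBasis (b := ((↑) : B → Set X)) (by rwa [Subtype.range_coe])
    fun U V ↦ hBc _ (hBi _ U.2 _ V.2)

end

theorem quasiComponent_isConnected_of_spectral_general
    {X : Type*} [TopologicalSpace X] [CompactSpace X] [QuasiSober X]
    (B : Set (Set X)) (hB : TopologicalSpace.IsTopologicalBasis B)
    (hBc : ∀ U ∈ B, IsCompact U)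
    (hBi : ∀ U ∈ B, ∀ V ∈ B, U ∩ V ∈ B)
    (x : X) :
    IsConnected (⋂₀ {A : Set X | IsClopen A ∧ x ∈ A}) := by
  have := PrespectralSpace.of_isTopologicalBasis hB hBc
  have := QuasiSeparatedSpace.of_isTopologicalBasis_of_inter_mem hB hBc hBi
  exact isConnected_quasiComponent x

/-- Every quasi-component of a spectral space is connected. A spectral space is a
quasi-compact sober topological space with a basis of quasi-compact opens closed under
pairwise intersections. -/
theorem quasiComponent_isConnected_of_spectral
    {X : Type*} [TopologicalSpace X] [CompactSpace X] [QuasiSober X] [T0Space X]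
    (B : Set (Set X)) (hB : TopologicalSpace.IsTopologicalBasis B)
    (hBc : ∀ U ∈ B, IsCompact U)
    (hBi : ∀ U ∈ B, ∀ V ∈ B, U ∩ V ∈ B)
    (x : X) :
    IsConnected (⋂₀ {A : Set X | IsClopen A ∧ x ∈ A}) :=
  quasiComponent_isConnected_of_spectral_general B hB hBc hBi x
end

section
/- Let X be a locally ringed space and R = O_X(X). Then X is connected if and only if Spec(R) is connected. -/
/-!
Both spaces are connected exactly when their Boolean algebra of clopen subsets has exactly two
elements. For `Spec R` the clopens correspond to the idempotents of `R`. For `X` they do too,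
via `e ↦ {x | e_x is a unit}`: an idempotent of a local ring is `0` or `1`, so this set and the
one of `1 - e` partition `X`; conversely, the sheaf property glues `1` on a clopen set and `0` on
its complement into an idempotent global section.
-/

open AlgebraicGeometry CategoryTheory Opposite TopologicalSpace

theorem connectedSpace_iff_isSimpleOrder_clopens {α : Type*} [TopologicalSpace α] :
    ConnectedSpace α ↔ IsSimpleOrder (Clopens α) := by
  rw [connectedSpace_iff_clopen, isSimpleOrder_iff]
  refine and_congr ⟨fun ⟨x⟩ => ⟨⊥, ⊤, fun h => ?_⟩, fun ⟨a, b, hab⟩ => ?_⟩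
    ⟨fun h a => ?_, fun h s hs => ?_⟩
  · exact (SetLike.ext_iff.mp h x).mpr trivial
  · by_contra h
    have := not_nonempty_iff.mp h
    exact hab (Clopens.ext (Subsingleton.elim (a : Set α) b))
  · simpa [← SetLike.coe_set_eq] using h a a.isClopen
  · simpa [← SetLike.coe_set_eq] using h ⟨s, hs⟩

theorem IsIdempotentElem.eq_zero_or_one_of_isLocalRing {R : Type*} [CommRing R] [IsLocalRing R]
    {e : R} (he : IsIdempotentElem e) : e = 0 ∨ e = 1 := by
  rcases IsLocalRing.isUnit_or_isUnit_one_sub_self e with h | h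
  · exact .inr ((IsIdempotentElem.iff_eq_one_of_isUnit h).mp he)
  · exact .inl (sub_eq_self.mp ((IsIdempotentElem.iff_eq_one_of_isUnit h).mp he.one_sub))

theorem TopCat.Presheaf.IsSheaf.exists_Γgerm_eq_one_and_Γgerm_eq_zero {X : TopCat}
    {F : X.Presheaf CommRingCat} (hF : F.IsSheaf) {s : Set X} (hs : IsClopen s) :
    ∃ e : F.obj (op ⊤), (∀ x ∈ s, F.Γgerm x e = 1) ∧ ∀ x ∉ s, F.Γgerm x e = 0 := by
  let U : Opens X := ⟨s, hs.isOpen⟩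
  let V : Opens X := ⟨sᶜ, hs.isClosed.isOpen_compl⟩
  have : Subsingleton (F.obj (op (U ⊓ V))) := CommRingCat.subsingleton_of_isTerminal <|
    Sheaf.isTerminalOfEqEmpty ⟨F, hF⟩ (Opens.ext (Set.inter_compl_self s))
  let glued := (Sheaf.objSupIsoProdEqLocus ⟨F, hF⟩ U V).inv ⟨(1, 0), Subsingleton.elim _ _⟩
  have glued_U : F.map (homOfLE le_sup_left).op glued = 1 :=
    Sheaf.objSupIsoProdEqLocus_inv_fst ⟨F, hF⟩ U V _
  have glued_V : F.map (homOfLE le_sup_right).op glued = 0 :=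
    Sheaf.objSupIsoProdEqLocus_inv_snd ⟨F, hF⟩ U V _
  have hUV : ⊤ ≤ U ⊔ V := fun x _ => em (x ∈ s)
  have germ_glued (W : Opens X) (hW : W ≤ U ⊔ V) (x : X) (hx : x ∈ W) :
      F.Γgerm x (F.map (homOfLE hUV).op glued) = F.germ W x hx (F.map (homOfLE hW).op glued) := by
    rw [germ_res_apply]; exact germ_res_apply _ _ _ _ _
  refine ⟨F.map (homOfLE hUV).op glued, fun x hx => ?_, fun x hx => ?_⟩
  · rw [germ_glued U le_sup_left x hx, glued_U, map_one]
  · rw [germ_glued V le_sup_right x hx, glued_V, map_zero]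

namespace AlgebraicGeometry.LocallyRingedSpace

variable (X : LocallyRingedSpace) {e : X.presheaf.obj (op ⊤)}

theorem Γgerm_eq_zero_or_one (he : IsIdempotentElem e) (x : X) :
    X.presheaf.Γgerm x e = 0 ∨ X.presheaf.Γgerm x e = 1 :=
  (he.map (X.presheaf.Γgerm x).hom).eq_zero_or_one_of_isLocalRing

open Classical in
theorem Γgerm_eq_ite_of_isIdempotentElem (he : IsIdempotentElem e) (x : X) :
    X.presheaf.Γgerm x e = if x ∈ X.toRingedSpace.basicOpen e then 1 else 0 := by
  rw [RingedSpace.mem_top_basicOpen]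
  rcases X.Γgerm_eq_zero_or_one he x with h | h <;> simp [h]

theorem basicOpen_injOn_isIdempotentElem :
    {e : X.presheaf.obj (op ⊤) | IsIdempotentElem e}.InjOn X.toRingedSpace.basicOpen :=
  fun e he f hf hef => TopCat.Presheaf.section_ext X.sheaf ⊤ e f fun x _ => by
    change X.presheaf.Γgerm x e = X.presheaf.Γgerm x f
    rw [X.Γgerm_eq_ite_of_isIdempotentElem he, X.Γgerm_eq_ite_of_isIdempotentElem hf, hef]

theorem coe_basicOpen_one_sub (he : IsIdempotentElem e) :
    (X.toRingedSpace.basicOpen (1 - e) : Set X.carrier) =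
      (X.toRingedSpace.basicOpen e : Set X.carrier)ᶜ := by
  ext x
  simp only [Set.mem_compl_iff, SetLike.mem_coe, RingedSpace.mem_top_basicOpen, map_sub, map_one]
  rcases X.Γgerm_eq_zero_or_one he x with h | h <;> simp [h]

theorem isClopen_basicOpen_of_isIdempotentElem (he : IsIdempotentElem e) :
    IsClopen (X.toRingedSpace.basicOpen e : Set X.carrier) :=
  ⟨isOpen_compl_iff.mp (X.coe_basicOpen_one_sub he ▸ (X.toRingedSpace.basicOpen _).isOpen),
    (X.toRingedSpace.basicOpen e).isOpen⟩

theorem exists_isIdempotentElem_basicOpen_eq {s : Set X.carrier} (hs : IsClopen s) :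
    ∃ e : X.presheaf.obj (op ⊤), IsIdempotentElem e ∧
      (X.toRingedSpace.basicOpen e : Set X.carrier) = s := by
  obtain ⟨e, h1, h0⟩ := X.IsSheaf.exists_Γgerm_eq_one_and_Γgerm_eq_zero hs
  refine ⟨e, TopCat.Presheaf.section_ext X.sheaf ⊤ _ _ fun x _ => ?_, Set.ext fun x => ?_⟩
  · change X.presheaf.Γgerm x (e * e) = X.presheaf.Γgerm x e
    by_cases hx : x ∈ s <;> simp [h1, h0, hx]
  · by_cases hx : x ∈ s <;> simp [h1, h0, hx]

noncomputable def isIdempotentElemEquivClopens :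
    {e : X.presheaf.obj (op ⊤) // IsIdempotentElem e} ≃o Clopens X.carrier := by
  refine .ofSurjective (.ofMapLEIff (fun e =>
    ⟨X.toRingedSpace.basicOpen e.1, X.isClopen_basicOpen_of_isIdempotentElem e.2⟩) fun e f => ?_)
    fun s => ?_
  · change X.toRingedSpace.basicOpen e.1 ≤ X.toRingedSpace.basicOpen f.1 ↔ e.1 * f.1 = e.1
    rw [← inf_eq_left, ← RingedSpace.basicOpen_mul]
    exact ⟨X.basicOpen_injOn_isIdempotentElem (e.2.mul f.2) e.2, congrArg _⟩
  · obtain ⟨e, he, hes⟩ := X.exists_isIdempotentElem_basicOpen_eq s.isClopen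
    exact ⟨⟨e, he⟩, Clopens.ext hes⟩

end AlgebraicGeometry.LocallyRingedSpace

/-- A locally ringed space `X` is connected if and only if the prime spectrum of its ring
of global sections is connected. -/
theorem locallyRingedSpace_connected_iff_spec_connected (X : LocallyRingedSpace) :
    ConnectedSpace ↑X.toRingedSpace.toPresheafedSpace ↔
      ConnectedSpace (PrimeSpectrum (X.presheaf.obj (op ⊤))) := by
  rw [connectedSpace_iff_isSimpleOrder_clopens, connectedSpace_iff_isSimpleOrder_clopens,
    ← X.isIdempotentElemEquivClopens.isSimpleOrder_iff,
    PrimeSpectrum.isIdempotentElemEquivClopens.isSimpleOrder_iff]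
end
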